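/- Let S be a minimal stopping set of a Tanner graph G that equals the support of a nonzero codeword of C(G). Then: (i) there exists a pseudocodeword of G with support S that is not a positive integer multiple of the incidence vector 1_S of S if and only if S has property Θ; and (ii) every pseudocodeword of G with support S that is not a positive integer multiple of 1_S is bad: for each such pseudocodeword p there exists a weight vector w ∈ R^n with ⟨p,w⟩ < 0 and ⟨c,w⟩ ≥ 0 for every codeword c ∈ C(G). -/
import Mathlib


/-- A Tanner graph with `n` variable nodes and `m` check nodes, given by the
neighborhood `N u` (the set of variable nodes adjacent to check node `u`). -/
structure TannerGraph (n m : ℕ) where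
  N : Fin m → Finset (Fin n)

/-- A codeword of the binary code `C(G)`: every check node has an even number of
neighbors assigned 1. -/
def IsCodeword {n m : ℕ} (G : TannerGraph n m) (c : Fin n → ZMod 2) : Prop :=
  ∀ j : Fin m, ∑ i ∈ G.N j, c i = 0

/-- A (lift-realizable) pseudocodeword of `G`. -/
def IsPseudocodeword {n m : ℕ} (G : TannerGraph n m) (p : Fin n → ℕ) : Prop :=
  ∀ j : Fin m, ∃ x : Finset (Fin n) → ℕ,
    ∀ i ∈ G.N j,
      p i = ∑ S ∈ (G.N j).powerset.filter (fun S => Even S.card ∧ i ∈ S), x S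

/-- The support of a natural-number vector, as a finset. -/
def suppN {n : ℕ} (p : Fin n → ℕ) : Finset (Fin n) :=
  Finset.univ.filter (fun i => p i ≠ 0)

/-- The support of a binary vector, as a finset. -/
def suppC {n : ℕ} (c : Fin n → ZMod 2) : Finset (Fin n) :=
  Finset.univ.filter (fun i => c i ≠ 0)

/-- A stopping set: every check node adjacent to some node of `S` is adjacent to
at least two nodes of `S`. -/
def IsStoppingSet {n m : ℕ} (G : TannerGraph n m) (S : Finset (Fin n)) : Prop :=
  ∀ j : Fin m, (G.N j ∩ S).Nonempty → 2 ≤ (G.N j ∩ S).card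

/-- A minimal stopping set: a stopping set containing no nonempty proper subset
that is a stopping set. -/
def IsMinimalStoppingSet {n m : ℕ} (G : TannerGraph n m) (S : Finset (Fin n)) : Prop :=
  IsStoppingSet G S ∧ ∀ S' : Finset (Fin n), S' ⊂ S → S'.Nonempty → ¬ IsStoppingSet G S'

/-- Two distinct variable nodes of `S` are linked in `G|_S` if they are both
adjacent to a common check node whose degree in the subgraph induced by `S` is
two. -/
def LinkedIn {n m : ℕ} (G : TannerGraph n m) (S : Finset (Fin n)) (a b : Fin n) : Prop :=
  ∃ j : Fin m, (G.N j ∩ S).card = 2 ∧ a ∈ G.N j ∩ S ∧ b ∈ G.N j ∩ S ∧ a ≠ b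

/-- A stopping set `S` has property Θ if it contains two variable nodes that are
not connected by any path in `G|_S` all of whose check nodes have degree two in
`G|_S`. -/
def HasPropertyTheta {n m : ℕ} (G : TannerGraph n m) (S : Finset (Fin n)) : Prop :=
  ∃ a ∈ S, ∃ b ∈ S, ¬ Relation.ReflTransGen (LinkedIn G S) a b

/-- A vector `p` is a bad pseudocodeword if some weight vector makes its cost
negative while all codewords (as 0/1 real vectors) have nonnegative cost. -/
def IsBad {n m : ℕ} (G : TannerGraph n m) (p : Fin n → ℝ) : Prop :=
  ∃ w : Fin n → ℝ, (∑ i, p i * w i) < 0 ∧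
    ∀ c : Fin n → ZMod 2, IsCodeword G c → 0 ≤ ∑ i, ((c i).val : ℝ) * w i

lemma sum_ind {n : ℕ} (Nj : Finset (Fin n)) (i : Fin n) (T0 : Finset (Fin n)) (v : ℕ)
    (h1 : T0 ⊆ Nj) (h2 : Even T0.card) :
    ∑ T ∈ Nj.powerset.filter (fun T => Even T.card ∧ i ∈ T), (if T = T0 then v else 0)
      = if i ∈ T0 then v else 0 := by
  rw [Finset.sum_ite_eq' _ T0 (fun _ => v)]
  simp [Finset.mem_filter, Finset.mem_powerset, h1, h2]

lemma even_inter {n m : ℕ} (G : TannerGraph n m) (c : Fin n → ZMod 2)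
    (hc : IsCodeword G c) (j : Fin m) : Even ((G.N j ∩ suppC c).card) := by
  have h := hc j
  have hsplit : ∑ i ∈ G.N j, c i = ∑ i ∈ G.N j ∩ suppC c, c i := by
    refine (Finset.sum_subset Finset.inter_subset_left ?_).symm
    intro i hi hni
    by_contra h0
    exact hni (Finset.mem_inter.mpr ⟨hi, by simp [suppC, h0]⟩)
  have hone : ∀ i ∈ G.N j ∩ suppC c, c i = 1 := by
    intro i hi
    have h1 : c i ≠ 0 := by simpa [suppC] using (Finset.mem_inter.mp hi).2
    have : ∀ z : ZMod 2, z ≠ 0 → z = 1 := by decide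
    exact this _ h1
  rw [hsplit, Finset.sum_congr rfl hone, Finset.sum_const, nsmul_eq_mul, mul_one] at h
  obtain ⟨k, hk⟩ := (ZMod.natCast_eq_zero_iff _ 2).mp h
  exact ⟨k, by omega⟩

lemma linked_eq {n m : ℕ} (G : TannerGraph n m) (S : Finset (Fin n)) (p : Fin n → ℕ)
    (hp : IsPseudocodeword G p) (h0 : ∀ i, i ∉ S → p i = 0) {u v : Fin n}
    (huv : LinkedIn G S u v) : p u = p v := by
  obtain ⟨j, hcard, hu, hv, hne⟩ := huv
  obtain ⟨x, hx⟩ := hp j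
  have hker : ∀ T, T ⊆ G.N j → Even T.card → (∃ w ∈ T, w ∉ S) → x T = 0 := by
    rintro T hT hTe ⟨w, hwT, hwS⟩
    have hw := hx w (hT hwT)
    rw [h0 w hwS] at hw
    exact (Finset.sum_eq_zero_iff.mp hw.symm) T
      (by simp [Finset.mem_filter, Finset.mem_powerset, hT, hTe, hwT])
  have hpair : ({u, v} : Finset (Fin n)) = G.N j ∩ S := by
    refine Finset.eq_of_subset_of_card_le ?_ ?_
    · intro w hw
      rcases Finset.mem_insert.mp hw with h | h
      · exact h ▸ hu
      · exact (Finset.mem_singleton.mp h) ▸ hv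
    · rw [hcard, Finset.card_pair hne]
  have key : ∀ w, w ∈ G.N j → w ∈ ({u, v} : Finset (Fin n)) → p w = x {u, v} := by
    intro w hwNj hwp
    rw [hx w hwNj]
    have hstep : ∀ T ∈ (G.N j).powerset.filter (fun T => Even T.card ∧ w ∈ T),
        x T = if T = ({u, v} : Finset (Fin n)) then x ({u, v} : Finset (Fin n)) else 0 := by
      intro T hT
      simp only [Finset.mem_filter, Finset.mem_powerset] at hT
      obtain ⟨hTN, hTe, hwT⟩ := hT
      by_cases hTuv : T = ({u, v} : Finset (Fin n))
      · simp [hTuv]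
      · rw [if_neg hTuv]
        by_cases hTS : T ⊆ S
        · exfalso
          have hsub : T ⊆ ({u, v} : Finset (Fin n)) := by
            rw [hpair]; exact fun z hz => Finset.mem_inter.mpr ⟨hTN hz, hTS hz⟩
          have h1 : 1 ≤ T.card := Finset.card_pos.mpr ⟨w, hwT⟩
          have h2 : T.card ≤ 2 := le_trans (Finset.card_le_card hsub) (by rw [Finset.card_pair hne])
          have : T.card = 2 := by obtain ⟨k, hk⟩ := hTe; omega
          exact hTuv (Finset.eq_of_subset_of_card_le hsub (by rw [Finset.card_pair hne, this]))
        · obtain ⟨z, hzT, hzS⟩ := Finset.not_subset.mp hTS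
          exact hker T hTN hTe ⟨z, hzT, hzS⟩
    rw [Finset.sum_congr rfl hstep, Finset.sum_ite_eq' _ ({u,v} : Finset (Fin n)) (fun _ => x {u,v})]
    rw [if_pos]
    simp only [Finset.mem_filter, Finset.mem_powerset]
    refine ⟨?_, ?_, hwp⟩
    · rw [hpair]; exact Finset.inter_subset_left
    · rw [Finset.card_pair hne]; exact even_two
  have huN : u ∈ G.N j := (Finset.mem_inter.mp hu).1
  have hvN : v ∈ G.N j := (Finset.mem_inter.mp hv).1
  rw [key u huN (Finset.mem_insert_self _ _), key v hvN (by simp)]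

lemma theta_construct {n m : ℕ} (G : TannerGraph n m) (S : Finset (Fin n))
    (hWe : ∀ j : Fin m, Even ((G.N j ∩ S).card))
    (hΘ : HasPropertyTheta G S) :
    ∃ p : Fin n → ℕ, IsPseudocodeword G p ∧ suppN p = S ∧
      ¬ ∃ k : ℕ, 0 < k ∧ p = fun i => if i ∈ S then k else 0 := by
  classical
  obtain ⟨a, haS, b, hbS, hab⟩ := hΘ
  set R : Fin n → Prop := Relation.ReflTransGen (LinkedIn G S) a with hR
  refine ⟨fun i => if i ∈ S then (if R i then 2 else 4) else 0, ?_, ?_, ?_⟩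
  · intro j
    set W := G.N j ∩ S with hW
    set B := W.filter (fun i => ¬ R i) with hBdef
    have hWN : W ⊆ G.N j := Finset.inter_subset_left
    have hWS : W ⊆ S := Finset.inter_subset_right
    have hBW : B ⊆ W := Finset.filter_subset _ _
    have hWev : Even W.card := hWe j
    by_cases hB : Even B.card
    · refine ⟨fun T => (if T = W then 2 else 0) + (if T = B then 2 else 0), ?_⟩
      intro i hi
      rw [Finset.sum_add_distrib, sum_ind _ _ _ _ hWN hWev, sum_ind _ _ _ _ (hBW.trans hWN) hB]
      by_cases hiS : i ∈ S
      · have hiW : i ∈ W := Finset.mem_inter.mpr ⟨hi, hiS⟩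
        by_cases hiR : R i
        · have hiB : i ∉ B := fun h => (Finset.mem_filter.mp h).2 hiR
          simp [hiS, hiR, hiW, hiB]
        · have hiB : i ∈ B := Finset.mem_filter.mpr ⟨hiW, hiR⟩
          simp [hiS, hiR, hiW, hiB]
      · have hiW : i ∉ W := fun h => hiS (hWS h)
        have hiB : i ∉ B := fun h => hiW (hBW h)
        simp [hiS, hiW, hiB]
    · have hBne : B.Nonempty := by
        rcases Finset.eq_empty_or_nonempty B with h | h
        · exact absurd (by simp [h]) hB
        · exact h
      have hBodd : ¬ Even B.card := hB
      by_cases hBc : B.card = 1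
      · obtain ⟨b0, hB0⟩ := Finset.card_eq_one.mp hBc
        have hb0B : b0 ∈ B := by rw [hB0]; exact Finset.mem_singleton_self b0
        have hb0W : b0 ∈ W := hBW hb0B
        have hb0R : ¬ R b0 := (Finset.mem_filter.mp hb0B).2
        have hBsingle : ∀ i ∈ B, i = b0 := by
          intro i hi; rw [hB0] at hi; exact Finset.mem_singleton.mp hi
        have hW2 : 2 ≤ W.card := by
          have h1 : 1 ≤ W.card := Finset.card_pos.mpr ⟨b0, hb0W⟩
          obtain ⟨k, hk⟩ := hWev; omega
        have hA'R : ∀ i ∈ W \ B, R i := by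
          intro i hiA
          obtain ⟨hiW, hiB⟩ := Finset.mem_sdiff.mp hiA
          by_contra h
          exact hiB (Finset.mem_filter.mpr ⟨hiW, h⟩)
        have hA'card : (W \ B).card = W.card - 1 := by
          rw [Finset.card_sdiff_of_subset hBW, hBc]
        have hWne2 : W.card ≠ 2 := by
          intro h2
          have hA'ne : (W \ B).Nonempty := Finset.card_pos.mp (by omega)
          obtain ⟨a', ha'⟩ := hA'ne
          have ha'W : a' ∈ W := (Finset.mem_sdiff.mp ha').1
          have hne : a' ≠ b0 := fun h => (Finset.mem_sdiff.mp ha').2 (h ▸ hb0B)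
          exact hb0R ((hA'R a' ha').tail ⟨j, h2, ha'W, hb0W, hne⟩)
        have hW4 : 4 ≤ W.card := by obtain ⟨k, hk⟩ := hWev; omega
        have hA'3 : 3 ≤ (W \ B).card := by omega
        obtain ⟨a1, ha1⟩ := Finset.card_pos.mp (show 0 < (W \ B).card by omega)
        obtain ⟨a2, ha2e⟩ := Finset.card_pos.mp
          (show 0 < ((W \ B).erase a1).card by rw [Finset.card_erase_of_mem ha1]; omega)
        have ha2 : a2 ∈ W \ B := Finset.mem_of_mem_erase ha2e
        have ha21 : a2 ≠ a1 := Finset.ne_of_mem_erase ha2e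
        have ha1W : a1 ∈ W := (Finset.mem_sdiff.mp ha1).1
        have ha2W : a2 ∈ W := (Finset.mem_sdiff.mp ha2).1
        have ha1B : a1 ∉ B := (Finset.mem_sdiff.mp ha1).2
        have ha2B : a2 ∉ B := (Finset.mem_sdiff.mp ha2).2
        have hb0a1 : b0 ≠ a1 := fun h => ha1B (h ▸ hb0B)
        have hb0a2 : b0 ≠ a2 := fun h => ha2B (h ▸ hb0B)
        have hpairsub : ({a1, a2} : Finset (Fin n)) ⊆ W := by
          intro z hz
          rcases Finset.mem_insert.mp hz with h | h
          · exact h ▸ ha1W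
          · exact (Finset.mem_singleton.mp h) ▸ ha2W
        have hsd : (W \ {a1, a2}).card = W.card - 2 := by
          rw [Finset.card_sdiff_of_subset hpairsub, Finset.card_pair (Ne.symm ha21)]
        have hsdev : Even ((W \ {a1, a2}).card) := by
          rw [hsd]; obtain ⟨k, hk⟩ := hWev; exact ⟨k - 1, by omega⟩
        have hp1sub : ({b0, a1} : Finset (Fin n)) ⊆ G.N j := by
          intro z hz
          rcases Finset.mem_insert.mp hz with h | h
          · exact hWN (h ▸ hb0W)
          · exact hWN ((Finset.mem_singleton.mp h) ▸ ha1W)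
        have hp2sub : ({b0, a2} : Finset (Fin n)) ⊆ G.N j := by
          intro z hz
          rcases Finset.mem_insert.mp hz with h | h
          · exact hWN (h ▸ hb0W)
          · exact hWN ((Finset.mem_singleton.mp h) ▸ ha2W)
        refine ⟨fun T => (if T = W then 1 else 0) + (if T = W \ {a1, a2} then 1 else 0)
            + (if T = ({b0, a1} : Finset (Fin n)) then 1 else 0)
            + (if T = ({b0, a2} : Finset (Fin n)) then 1 else 0), ?_⟩
        intro i hi
        rw [Finset.sum_add_distrib, Finset.sum_add_distrib, Finset.sum_add_distrib,
          sum_ind _ _ _ _ hWN hWev,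
          sum_ind _ _ _ _ ((Finset.sdiff_subset).trans hWN) hsdev,
          sum_ind _ _ _ _ hp1sub (by rw [Finset.card_pair hb0a1]; exact even_two),
          sum_ind _ _ _ _ hp2sub (by rw [Finset.card_pair hb0a2]; exact even_two)]
        by_cases hiS : i ∈ S
        · have hiW : i ∈ W := Finset.mem_inter.mpr ⟨hi, hiS⟩
          by_cases hiR : R i
          · have hiB : i ∉ B := fun h => (Finset.mem_filter.mp h).2 hiR
            have hib0 : i ≠ b0 := fun h => hiB (h ▸ hb0B)
            by_cases hia1 : i = a1
            · subst hia1
              simp [hiS, hiR, hiW, hib0, ha21, Ne.symm ha21]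
            · by_cases hia2 : i = a2
              · subst hia2
                simp [hiS, hiR, hiW, hib0, ha21]
              · have hisd : i ∈ W \ {a1, a2} := by
                  refine Finset.mem_sdiff.mpr ⟨hiW, ?_⟩
                  simp [hia1, hia2]
                simp [hiS, hiR, hiW, hisd, hib0, hia1, hia2]
          · have hiB : i ∈ B := Finset.mem_filter.mpr ⟨hiW, hiR⟩
            have hib0 : i = b0 := hBsingle i hiB
            subst hib0
            have hisd : i ∈ W \ {a1, a2} := by
              refine Finset.mem_sdiff.mpr ⟨hiW, ?_⟩
              simp [hb0a1, hb0a2]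
            simp [hiS, hiR, hiW, hisd]
        · have hiW : i ∉ W := fun h => hiS (hWS h)
          have hib0 : i ≠ b0 := fun h => hiS (hWS (h ▸ hb0W))
          have hia1 : i ≠ a1 := fun h => hiS (hWS (h ▸ ha1W))
          have hia2 : i ≠ a2 := fun h => hiS (hWS (h ▸ ha2W))
          have hisd : i ∉ W \ {a1, a2} := fun h => hiW (Finset.mem_sdiff.mp h).1
          simp [hiS, hiW, hisd, hib0, hia1, hia2]
      · -- B.card odd, ≥ 3
        have hB3 : 3 ≤ B.card := by
          have h1 : 1 ≤ B.card := Finset.card_pos.mpr hBne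
          rcases Nat.even_or_odd B.card with h | h
          · exact absurd h hBodd
          · obtain ⟨k, hk⟩ := h; omega
        obtain ⟨b1, hb1⟩ := hBne
        obtain ⟨b2, hb2e⟩ := Finset.card_pos.mp
          (show 0 < (B.erase b1).card by rw [Finset.card_erase_of_mem hb1]; omega)
        have hb2 : b2 ∈ B := Finset.mem_of_mem_erase hb2e
        have hb21 : b2 ≠ b1 := Finset.ne_of_mem_erase hb2e
        have hb1W : b1 ∈ W := hBW hb1
        have hb2W : b2 ∈ W := hBW hb2
        have her1 : Even ((B.erase b1).card) := by
          rw [Finset.card_erase_of_mem hb1]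
          rcases Nat.even_or_odd B.card with h | h
          · exact absurd h hBodd
          · obtain ⟨k, hk⟩ := h; exact ⟨k, by omega⟩
        have her2 : Even ((B.erase b2).card) := by
          rw [Finset.card_erase_of_mem hb2]
          rcases Nat.even_or_odd B.card with h | h
          · exact absurd h hBodd
          · obtain ⟨k, hk⟩ := h; exact ⟨k, by omega⟩
        have hpsub : ({b1, b2} : Finset (Fin n)) ⊆ G.N j := by
          intro z hz
          rcases Finset.mem_insert.mp hz with h | h
          · exact hWN (h ▸ hb1W)
          · exact hWN ((Finset.mem_singleton.mp h) ▸ hb2W)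
        refine ⟨fun T => (if T = W then 2 else 0) + (if T = B.erase b1 then 1 else 0)
            + (if T = B.erase b2 then 1 else 0)
            + (if T = ({b1, b2} : Finset (Fin n)) then 1 else 0), ?_⟩
        intro i hi
        rw [Finset.sum_add_distrib, Finset.sum_add_distrib, Finset.sum_add_distrib,
          sum_ind _ _ _ _ hWN hWev,
          sum_ind _ _ _ _ (((Finset.erase_subset _ _).trans hBW).trans hWN) her1,
          sum_ind _ _ _ _ (((Finset.erase_subset _ _).trans hBW).trans hWN) her2,
          sum_ind _ _ _ _ hpsub (by rw [Finset.card_pair (Ne.symm hb21)]; exact even_two)]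
        by_cases hiS : i ∈ S
        · have hiW : i ∈ W := Finset.mem_inter.mpr ⟨hi, hiS⟩
          by_cases hiR : R i
          · have hiB : i ∉ B := fun h => (Finset.mem_filter.mp h).2 hiR
            have hib1 : i ≠ b1 := fun h => hiB (h ▸ hb1)
            have hib2 : i ≠ b2 := fun h => hiB (h ▸ hb2)
            have he1 : i ∉ B.erase b1 := fun h => hiB (Finset.mem_of_mem_erase h)
            have he2 : i ∉ B.erase b2 := fun h => hiB (Finset.mem_of_mem_erase h)
            simp [hiS, hiR, hiW, he1, he2, hib1, hib2]
          · have hiB : i ∈ B := Finset.mem_filter.mpr ⟨hiW, hiR⟩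
            by_cases hib1 : i = b1
            · subst hib1
              have he1 : i ∉ B.erase i := Finset.notMem_erase _ _
              have he2 : i ∈ B.erase b2 := Finset.mem_erase.mpr ⟨Ne.symm hb21, hiB⟩
              simp [hiS, hiR, hiW, he1, he2]
            · by_cases hib2 : i = b2
              · subst hib2
                have he1 : i ∈ B.erase b1 := Finset.mem_erase.mpr ⟨hb21, hiB⟩
                have he2 : i ∉ B.erase i := Finset.notMem_erase _ _
                simp [hiS, hiR, hiW, he1, he2, hb21]
              · have he1 : i ∈ B.erase b1 := Finset.mem_erase.mpr ⟨hib1, hiB⟩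
                have he2 : i ∈ B.erase b2 := Finset.mem_erase.mpr ⟨hib2, hiB⟩
                simp [hiS, hiR, hiW, he1, he2, hib1, hib2]
        · have hiW : i ∉ W := fun h => hiS (hWS h)
          have hib1 : i ≠ b1 := fun h => hiS (hWS (h ▸ hb1W))
          have hib2 : i ≠ b2 := fun h => hiS (hWS (h ▸ hb2W))
          have he1 : i ∉ B.erase b1 := fun h => hiW (hBW (Finset.mem_of_mem_erase h))
          have he2 : i ∉ B.erase b2 := fun h => hiW (hBW (Finset.mem_of_mem_erase h))
          simp [hiS, hiW, he1, he2, hib1, hib2]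
  · ext i
    simp only [suppN, Finset.mem_filter, Finset.mem_univ, true_and]
    by_cases hiS : i ∈ S
    · by_cases hiR : R i <;> simp [hiS, hiR]
    · simp [hiS]
  · rintro ⟨k, hk, hpk⟩
    have h1 := congrFun hpk a
    have h2 := congrFun hpk b
    have hRa : R a := Relation.ReflTransGen.refl
    rw [if_pos haS, if_pos haS, if_pos hRa] at h1
    rw [if_pos hbS, if_pos hbS, if_neg hab] at h2
    omega

theorem minimal_codeword_support_stopping_set {n m : ℕ} (G : TannerGraph n m)
    (S : Finset (Fin n)) (hmin : IsMinimalStoppingSet G S)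
    (c : Fin n → ZMod 2) (hc : IsCodeword G c) (hc0 : c ≠ 0) (hcs : suppC c = S) :
    ((∃ p : Fin n → ℕ, IsPseudocodeword G p ∧ suppN p = S ∧
        ¬ ∃ k : ℕ, 0 < k ∧ p = fun i => if i ∈ S then k else 0) ↔
      HasPropertyTheta G S) ∧
    (∀ p : Fin n → ℕ, IsPseudocodeword G p → suppN p = S →
      (¬ ∃ k : ℕ, 0 < k ∧ p = fun i => if i ∈ S then k else 0) →
      IsBad G (fun i => (p i : ℝ))) := by
  classical
  have hone : ∀ z : ZMod 2, z ≠ 0 → z = 1 := by decide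
  have hval01 : ∀ z : ZMod 2, z.val = 0 ∨ z.val = 1 := by decide
  have hpt : ∀ i, i ∈ S ↔ c i ≠ 0 := by
    intro i; rw [← hcs]; simp [suppC]
  have hS_ne : S.Nonempty := by
    have hex : ∃ i, c i ≠ 0 := by
      by_contra h; push_neg at h; exact hc0 (funext fun i => h i)
    obtain ⟨i, hi⟩ := hex
    exact ⟨i, (hpt i).mpr hi⟩
  have hcard1 : 1 ≤ S.card := Finset.card_pos.mpr hS_ne
  have hWe : ∀ j : Fin m, Even ((G.N j ∩ S).card) := by
    intro j; have h := even_inter G c hc j; rwa [hcs] at h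
  constructor
  · constructor
    · rintro ⟨p, hp, hsupp, hnk⟩
      by_contra hΘ
      simp only [HasPropertyTheta, not_exists] at hΘ
      push_neg at hΘ
      have h0 : ∀ i, i ∉ S → p i = 0 := by
        intro i hi
        by_contra h
        exact hi (hsupp ▸ (Finset.mem_filter.mpr ⟨Finset.mem_univ _, h⟩))
      obtain ⟨a0, ha0⟩ := hS_ne
      apply hnk
      have hchain : ∀ b, Relation.ReflTransGen (LinkedIn G S) a0 b → p a0 = p b := by
        intro b hb
        induction hb with
        | refl => rfl
        | tail _ h ih => exact ih.trans (linked_eq G S p hp h0 h)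
      refine ⟨p a0, ?_, funext fun i => ?_⟩
      · have : a0 ∈ suppN p := hsupp ▸ ha0
        simp only [suppN, Finset.mem_filter] at this
        omega
      · by_cases hiS : i ∈ S
        · rw [if_pos hiS]
          exact (hchain i (hΘ a0 ha0 i hiS)).symm
        · rw [if_neg hiS]; exact h0 i hiS
    · intro hΘ
      exact theta_construct G S hWe hΘ
  · intro p hp hsupp hnk
    have h0 : ∀ i, i ∉ S → p i = 0 := by
      intro i hi
      by_contra h
      exact hi (hsupp ▸ (Finset.mem_filter.mpr ⟨Finset.mem_univ _, h⟩))
    have hmemS : ∀ i, i ∈ S → p i ≠ 0 := by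
      intro i hi
      have : i ∈ suppN p := hsupp ▸ hi
      simpa [suppN] using this
    obtain ⟨a0, ha0S, hmax⟩ := Finset.exists_max_image S p hS_ne
    have hex : ∃ i1 ∈ S.erase a0, p i1 < p a0 := by
      by_contra h
      push_neg at h
      apply hnk
      refine ⟨p a0, Nat.pos_of_ne_zero (hmemS a0 ha0S), funext fun i => ?_⟩
      by_cases hiS : i ∈ S
      · rw [if_pos hiS]
        by_cases hia : i = a0
        · rw [hia]
        · exact le_antisymm (hmax i hiS) (h i (Finset.mem_erase.mpr ⟨hia, hiS⟩))
      · rw [if_neg hiS]; exact h0 i hiS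
    obtain ⟨i1, hi1e, hi1lt⟩ := hex
    set K : ℝ := (S.card : ℝ) with hKdef
    have hK1 : 1 ≤ K := by
      rw [hKdef]; exact_mod_cast hcard1
    set w : Fin n → ℝ := fun i => if i ∈ S then (if i = a0 then 1 - K else 1) else K with hwdef
    have hwa0 : w a0 = 1 - K := by rw [hwdef]; simp [ha0S]
    have hw1 : ∀ i ∈ S.erase a0, w i = 1 := by
      intro i hi
      obtain ⟨hia, hiS⟩ := Finset.mem_erase.mp hi
      rw [hwdef]; simp [hiS, hia]
    have hwout : ∀ i, i ∉ S → w i = K := by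
      intro i hi; rw [hwdef]; simp [hi]
    refine ⟨w, ?_, ?_⟩
    · -- negative pseudocodeword cost
      have hnat : ∑ i ∈ S.erase a0, p i < (S.card - 1) * p a0 := by
        have h1 : ∑ i ∈ S.erase a0, p i < ∑ _i ∈ S.erase a0, p a0 :=
          Finset.sum_lt_sum (fun i hi => hmax i (Finset.mem_of_mem_erase hi)) ⟨i1, hi1e, hi1lt⟩
        rwa [Finset.sum_const, Finset.card_erase_of_mem ha0S, smul_eq_mul] at h1
      have hsum1 : ∑ i, (p i : ℝ) * w i = ∑ i ∈ S, (p i : ℝ) * w i := by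
        refine (Finset.sum_subset (Finset.subset_univ S) ?_).symm
        intro i _ hiS
        rw [h0 i hiS]; simp
      have hsum2 : ∑ i ∈ S, (p i : ℝ) * w i
          = (p a0 : ℝ) * (1 - K) + ∑ i ∈ S.erase a0, (p i : ℝ) := by
        rw [← Finset.add_sum_erase S _ ha0S, hwa0]
        congr 1
        refine Finset.sum_congr rfl fun i hi => ?_
        rw [hw1 i hi, mul_one]
      have hcast : (∑ i ∈ S.erase a0, (p i : ℝ)) < (K - 1) * (p a0 : ℝ) := by
        have := hnat
        have h2 : ((∑ i ∈ S.erase a0, p i : ℕ) : ℝ) < (((S.card - 1) * p a0 : ℕ) : ℝ) := by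
          exact_mod_cast this
        rw [Nat.cast_sum] at h2
        rw [Nat.cast_mul, Nat.cast_sub hcard1] at h2
        simpa [hKdef] using h2
      rw [hsum1, hsum2]
      have hring : (p a0 : ℝ) * (1 - K) = -((K - 1) * (p a0 : ℝ)) := by ring
      linarith
    · -- codewords have nonnegative cost
      intro c' hc'
      show (0:ℝ) ≤ ∑ i, ((c' i).val : ℝ) * w i
      by_cases hsub : suppC c' ⊆ S
      · by_cases hz : c' = 0
        · subst hz; simp
        · have hne' : (suppC c').Nonempty := by
            have hex : ∃ i, c' i ≠ 0 := by
              by_contra h; push_neg at h; exact hz (funext fun i => h i)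
            obtain ⟨i, hi⟩ := hex
            exact ⟨i, by simp [suppC, hi]⟩
          have hstop' : IsStoppingSet G (suppC c') := by
            intro j hnej
            have hev := even_inter G c' hc' j
            have h1 : 1 ≤ (G.N j ∩ suppC c').card := Finset.card_pos.mpr hnej
            obtain ⟨k, hk⟩ := hev; omega
          have heq : suppC c' = S := by
            by_contra h
            exact hmin.2 (suppC c') (Finset.ssubset_iff_subset_ne.mpr ⟨hsub, h⟩) hne' hstop'
          have hv1 : ∀ i ∈ S, ((c' i).val : ℝ) = 1 := by
            intro i hi
            have hnz : c' i ≠ 0 := by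
              rw [← heq] at hi; simpa [suppC] using hi
            rw [hone _ hnz]
            norm_num [show (1 : ZMod 2).val = 1 from rfl]
          have hv0 : ∀ i, i ∉ S → ((c' i).val : ℝ) = 0 := by
            intro i hi
            rw [← heq] at hi
            simp only [suppC, Finset.mem_filter, Finset.mem_univ, true_and, not_not] at hi
            rw [hi]
            norm_num [show (0 : ZMod 2).val = 0 from rfl]
          have hsum1 : ∑ i, ((c' i).val : ℝ) * w i = ∑ i ∈ S, ((c' i).val : ℝ) * w i := by
            refine (Finset.sum_subset (Finset.subset_univ S) ?_).symm
            intro i _ hiS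
            rw [hv0 i hiS, zero_mul]
          have hsum2 : ∑ i ∈ S, ((c' i).val : ℝ) * w i = ∑ i ∈ S, w i := by
            refine Finset.sum_congr rfl fun i hi => ?_
            rw [hv1 i hi, one_mul]
          have hsum3 : ∑ i ∈ S, w i = (1 - K) + (S.card - 1 : ℕ) := by
            rw [← Finset.add_sum_erase S _ ha0S, hwa0]
            congr 1
            rw [Finset.sum_congr rfl hw1, Finset.sum_const, Finset.card_erase_of_mem ha0S,
              nsmul_eq_mul, mul_one]
          rw [hsum1, hsum2, hsum3]
          rw [Nat.cast_sub hcard1]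
          simp [hKdef]
      · obtain ⟨u, huSupp, huS⟩ := Finset.not_subset.mp hsub
        have hcu : ((c' u).val : ℝ) = 1 := by
          have hnz : c' u ≠ 0 := by simpa [suppC] using huSupp
          rw [hone _ hnz]
          norm_num [show (1 : ZMod 2).val = 1 from rfl]
        have hval_le : ∀ i, ((c' i).val : ℝ) ≤ 1 := by
          intro i; rcases hval01 (c' i) with h | h <;> rw [h] <;> norm_num
        have hval_nn : ∀ i, (0 : ℝ) ≤ ((c' i).val : ℝ) := fun i => Nat.cast_nonneg _
        have hsplit := Finset.sum_filter_add_sum_filter_not Finset.univ (· ∈ S)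
          (fun i => ((c' i).val : ℝ) * w i)
        have hfS : Finset.univ.filter (· ∈ S) = S := Finset.filter_univ_mem S
        have hb1 : K ≤ ∑ i ∈ Finset.univ.filter (fun i => ¬ i ∈ S), ((c' i).val : ℝ) * w i := by
          have hu_mem : u ∈ Finset.univ.filter (fun i => ¬ i ∈ S) := by
            simp [huS]
          have hterm : ((c' u).val : ℝ) * w u = K := by
            rw [hcu, hwout u huS, one_mul]
          rw [← hterm]
          refine Finset.single_le_sum (f := fun i => ((c' i).val : ℝ) * w i) ?_ hu_mem
          intro i hi
          simp only [Finset.mem_filter] at hi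
          rw [hwout i hi.2]
          exact mul_nonneg (hval_nn i) (by linarith)
        have hb2 : 1 - K ≤ ∑ i ∈ Finset.univ.filter (· ∈ S), ((c' i).val : ℝ) * w i := by
          rw [hfS, ← Finset.add_sum_erase S _ ha0S]
          have hterm : 1 - K ≤ ((c' a0).val : ℝ) * w a0 := by
            rw [hwa0]
            have h1 : (1 : ℝ) - K ≤ 0 := by linarith
            nlinarith [hval_le a0, hval_nn a0]
          have hrest : (0 : ℝ) ≤ ∑ i ∈ S.erase a0, ((c' i).val : ℝ) * w i := by
            refine Finset.sum_nonneg fun i hi => ?_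
            rw [hw1 i hi, mul_one]
            exact hval_nn i
          linarith
        calc (0 : ℝ) ≤ (1 - K) + K := by linarith
        _ ≤ _ := by rw [← hsplit]; exact add_le_add hb2 hb1
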